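/- In the Tajima (Kingman) coalescent starting with n leaves, where at each step a uniformly random pair of the extant lineages merges, the probability that a fixed leaf remains an unmerged external branch when k lineages remain is E[Z_{1,k}] = k(k-1)/(n(n-1)), and the probability that two fixed distinct leaves both remain external, one until l lineages remain and the other until k ≤ l lineages remain, is E[Z_{1,k} Z_{2,l}] = (l-1)(l-2)k(k-1)/(n(n-1)²(n-2)). -/
import Mathlib


open scoped Classical

/-- Collapse the pair of lineage labels `{a, b}`: the larger label is merged
into the smaller one and all larger labels are shifted down by one. -/
def collapse (a b x : ℕ) : ℕ :=
  if x = max a b then min a b else if max a b < x then x - 1 else x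

/-- The lineage map of the coalescent after `s` merge events: `chainMap n ω s i`
is the label of the lineage currently containing leaf `i`, where `ω` lists the
pair of lineages merged at each step. -/
def chainMap (n : ℕ) (ω : Fin (n - 1) → Fin n × Fin n) : ℕ → Fin n → ℕ
  | 0 => fun i => (i : ℕ)
  | s + 1 => fun i =>
      if h : s < n - 1 then
        collapse ((ω ⟨s, h⟩).1 : ℕ) ((ω ⟨s, h⟩).2 : ℕ) (chainMap n ω s i)
      else chainMap n ω s i

/-- `ω` is a valid sequence of coalescent merge choices: at step `s` (when
`n - s` lineages remain) an unordered pair of the `n - s` current lineages is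
chosen. -/
def ValidSeq (n : ℕ) (ω : Fin (n - 1) → Fin n × Fin n) : Prop :=
  ∀ s : Fin (n - 1), ((ω s).1 : ℕ) < ((ω s).2 : ℕ) ∧ ((ω s).2 : ℕ) < n - (s : ℕ)

/-- The sample space of the Yule / Kingman coalescent with `n` leaves: all
sequences of merge choices, each such sequence being equally likely (at every
step a uniformly chosen pair of the extant lineages merges). -/
noncomputable def coalSpace (n : ℕ) : Finset (Fin (n - 1) → Fin n × Fin n) :=
  Finset.univ.filter (ValidSeq n)

/-- The block (set of leaves) of the lineage containing leaf `i` when `k`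
lineages remain. -/
noncomputable def blockOf (n : ℕ) (ω : Fin (n - 1) → Fin n × Fin n) (k : ℕ)
    (i : Fin n) : Finset (Fin n) :=
  Finset.univ.filter (fun j => chainMap n ω (n - k) j = chainMap n ω (n - k) i)

/-- `Zext n ω i k`: leaf `i` is still an external branch (a singleton lineage)
when `k` lineages remain. -/
def Zext (n : ℕ) (ω : Fin (n - 1) → Fin n × Fin n) (i : Fin n) (k : ℕ) : Prop :=
  blockOf n ω k i = {i}

/-- The partition (set of blocks) of the leaves when `k` lineages remain. -/
noncomputable def blocksAt (n : ℕ) (ω : Fin (n - 1) → Fin n × Fin n) (k : ℕ) :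
    Finset (Finset (Fin n)) :=
  Finset.univ.image (fun i => blockOf n ω k i)

/-- The F-matrix of the ranked tree shape generated by the coalescent `ω`:
`FmatOf n ω i j` is the number of branches extant when `j + 1` branches are
present that have not yet bifurcated by the interval with `i + 1` branches,
i.e. the number of common blocks of the partitions into `j + 1` and `i + 1`
lineages. -/
noncomputable def FmatOf (n : ℕ) (ω : Fin (n - 1) → Fin n × Fin n) (i j : ℕ) : ℕ :=
  (blocksAt n ω (j + 1) ∩ blocksAt n ω (i + 1)).card

/-- The D-matrix entry `D i j = F i j - F i (j-1)`: the number of children of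
the node creating the `(j+1)`-st branch that have not bifurcated by interval
`i`. -/
noncomputable def DmatOf (n : ℕ) (ω : Fin (n - 1) → Fin n × Fin n) (i j : ℕ) : ℤ :=
  (FmatOf n ω i j : ℤ) - (FmatOf n ω i (j - 1) : ℤ)

/-- Probability of an event under the Yule / Kingman coalescent with `n`
leaves (uniform measure on merge-choice sequences). -/
noncomputable def coalP (n : ℕ) (A : (Fin (n - 1) → Fin n × Fin n) → Prop) : ℝ :=
  (((coalSpace n).filter A).card : ℝ) / ((coalSpace n).card : ℝ)

/-- Expectation of a random variable under the Yule / Kingman coalescent with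
`n` leaves. -/
noncomputable def coalE (n : ℕ) (X : (Fin (n - 1) → Fin n × Fin n) → ℝ) : ℝ :=
  (∑ ω ∈ coalSpace n, X ω) / ((coalSpace n).card : ℝ)


section Aux

open Finset

lemma collapse_lt {a b x m : ℕ} (hab : a < b) (hb : b < m) (hx : x < m) :
    collapse a b x < m - 1 := by
  unfold collapse
  rw [Nat.max_eq_right hab.le, Nat.min_eq_left hab.le]
  split_ifs <;> omega

lemma collapse_inj {a b y z : ℕ} (hab : a < b)
    (h : collapse a b y = collapse a b z) :
    y = z ∨ (y = a ∧ z = b) ∨ (y = b ∧ z = a) := by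
  unfold collapse at h
  rw [Nat.max_eq_right hab.le, Nat.min_eq_left hab.le] at h
  split_ifs at h <;> omega

lemma collapse_surj {a b y m : ℕ} (hab : a < b) (hb : b < m) (hy : y < m - 1) :
    ∃ x, x < m ∧ collapse a b x = y := by
  unfold collapse
  rw [Nat.max_eq_right hab.le, Nat.min_eq_left hab.le]
  by_cases hyb : y < b
  · exact ⟨y, by omega, by rw [if_neg (by omega), if_neg (by omega)]⟩
  · exact ⟨y + 1, by omega, by rw [if_neg (by omega), if_pos (by omega)]; omega⟩

lemma collapse_left {a b : ℕ} (hab : a < b) : collapse a b a = a := by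
  unfold collapse
  rw [Nat.max_eq_right hab.le, Nat.min_eq_left hab.le]
  rw [if_neg (by omega), if_neg (by omega)]

lemma collapse_right {a b : ℕ} (hab : a < b) : collapse a b b = a := by
  unfold collapse
  rw [Nat.max_eq_right hab.le, Nat.min_eq_left hab.le]
  rw [if_pos rfl]

variable {n : ℕ}

lemma chainMap_succ (ω : Fin (n-1) → Fin n × Fin n) (s : ℕ) (h : s < n - 1) (i : Fin n) :
    chainMap n ω (s+1) i
      = collapse ((ω ⟨s, h⟩).1 : ℕ) ((ω ⟨s, h⟩).2 : ℕ) (chainMap n ω s i) := by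
  simp [chainMap, h]

lemma validSeq_bounds {ω : Fin (n-1) → Fin n × Fin n} (hω : ValidSeq n ω)
    {s : ℕ} (h : s < n - 1) :
    ((ω ⟨s, h⟩).1 : ℕ) < ((ω ⟨s, h⟩).2 : ℕ) ∧ ((ω ⟨s, h⟩).2 : ℕ) < n - s :=
  hω ⟨s, h⟩

lemma chainMap_lt {ω : Fin (n-1) → Fin n × Fin n} (hω : ValidSeq n ω)
    {s : ℕ} (hs : s ≤ n - 1) (i : Fin n) : chainMap n ω s i < n - s := by
  induction s with
  | zero =>
      have := i.2
      show (i : ℕ) < n - 0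
      omega
  | succ s ih =>
      have h : s < n - 1 := hs
      rw [chainMap_succ ω s h i]
      have hv := validSeq_bounds hω h
      have := collapse_lt hv.1 hv.2 (ih (le_of_lt h))
      omega

lemma chainMap_surj {ω : Fin (n-1) → Fin n × Fin n} (hω : ValidSeq n ω)
    {s : ℕ} (hs : s ≤ n - 1) : ∀ y : ℕ, y < n - s →
    ∃ i : Fin n, chainMap n ω s i = y := by
  induction s with
  | zero => exact fun y hy => ⟨⟨y, by omega⟩, rfl⟩
  | succ s ih =>
      intro y hy
      have h : s < n - 1 := hs
      have hv := validSeq_bounds hω h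
      obtain ⟨x, hxlt, hxc⟩ := collapse_surj (m := n - s) hv.1 hv.2 (y := y) (by omega)
      obtain ⟨i, hi⟩ := ih (le_of_lt h) x hxlt
      exact ⟨i, by rw [chainMap_succ ω s h i, hi, hxc]⟩

lemma chainMap_congr {ω ω' : Fin (n-1) → Fin n × Fin n} {s : ℕ}
    (h : ∀ t : Fin (n-1), (t : ℕ) < s → ω t = ω' t) (i : Fin n) :
    chainMap n ω s i = chainMap n ω' s i := by
  induction s with
  | zero => rfl
  | succ s ih =>
      by_cases hs : s < n - 1
      · rw [chainMap_succ ω s hs i, chainMap_succ ω' s hs i,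
          h ⟨s, hs⟩ (by simp), ih (fun t ht => h t (by omega))]
      · show (if h : s < n - 1 then _ else chainMap n ω s i)
            = (if h : s < n - 1 then _ else chainMap n ω' s i)
        rw [dif_neg hs, dif_neg hs]
        exact ih (fun t ht => h t (by omega))

end Aux
section Sing

open Finset

variable {n : ℕ}

/-- leaf `a` avoids the merge at step `s`. -/
def Avoid (n : ℕ) (a : Fin n) (s : ℕ) (ω : Fin (n-1) → Fin n × Fin n) : Prop :=
  ∀ h : s < n - 1, ((ω ⟨s, h⟩).1 : ℕ) ≠ chainMap n ω s a ∧
    ((ω ⟨s, h⟩).2 : ℕ) ≠ chainMap n ω s a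

/-- leaf `a` is a singleton lineage after `s` merge steps. -/
def Sing (n : ℕ) (a : Fin n) (s : ℕ) (ω : Fin (n-1) → Fin n × Fin n) : Prop :=
  ∀ j : Fin n, chainMap n ω s j = chainMap n ω s a → j = a

lemma zext_iff_sing (ω : Fin (n-1) → Fin n × Fin n) (a : Fin n) (k : ℕ) :
    Zext n ω a k ↔ Sing n a (n - k) ω := by
  constructor
  · intro h j hj
    have : j ∈ blockOf n ω k a := by
      simp [blockOf, hj]
    rw [Zext] at h
    rw [h] at this
    simpa using this
  · intro h
    rw [Zext]
    apply Finset.eq_singleton_iff_unique_mem.2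
    constructor
    · simp [blockOf]
    · intro j hj
      apply h
      simpa [blockOf] using hj

lemma sing_succ {ω : Fin (n-1) → Fin n × Fin n} (hω : ValidSeq n ω)
    {s : ℕ} (hs : s < n - 1) (a : Fin n) :
    Sing n a (s+1) ω ↔ Sing n a s ω ∧ Avoid n a s ω := by
  have hv := validSeq_bounds hω hs
  set pa := ((ω ⟨s, hs⟩).1 : ℕ) with hpa
  set pb := ((ω ⟨s, hs⟩).2 : ℕ) with hpb
  have hxa : chainMap n ω s a < n - s := chainMap_lt hω (le_of_lt hs) a
  constructor
  · intro h
    have hsing : Sing n a s ω := by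
      intro j hj
      apply h
      rw [chainMap_succ ω s hs, chainMap_succ ω s hs, hj]
    refine ⟨hsing, fun _ => ⟨?_, ?_⟩⟩
    · -- pa ≠ chain s a
      intro hcon
      obtain ⟨j, hj⟩ := chainMap_surj hω (le_of_lt hs) pb (by omega)
      have hja : j ≠ a := by
        intro he; rw [he] at hj
        omega
      apply hja
      apply h
      rw [chainMap_succ ω s hs, chainMap_succ ω s hs, hj, ← hcon, ← hpa, ← hpb,
        collapse_right hv.1, collapse_left hv.1]
    · intro hcon
      obtain ⟨j, hj⟩ := chainMap_surj hω (le_of_lt hs) pa (by omega)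
      have hja : j ≠ a := by
        intro he; rw [he] at hj
        omega
      apply hja
      apply h
      rw [chainMap_succ ω s hs, chainMap_succ ω s hs, hj, ← hcon, ← hpa, ← hpb,
        collapse_left hv.1, collapse_right hv.1]
  · rintro ⟨hsing, hav⟩ j hj
    rw [chainMap_succ ω s hs, chainMap_succ ω s hs] at hj
    rcases collapse_inj hv.1 hj with h1 | h2 | h3
    · exact hsing j h1
    · exact absurd (hav hs).2.symm (by simp [← hpb, h2.2])
    · exact absurd (hav hs).1.symm (by simp [← hpa, h3.2])

lemma sing_iff_avoid {ω : Fin (n-1) → Fin n × Fin n} (hω : ValidSeq n ω)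
    {m : ℕ} (hm : m ≤ n - 1) (a : Fin n) :
    Sing n a m ω ↔ ∀ s < m, Avoid n a s ω := by
  induction m with
  | zero =>
      simp only [Nat.not_lt_zero, false_implies, implies_true, iff_true]
      intro j hj
      exact Fin.ext hj
  | succ m ih =>
      rw [sing_succ hω hm a, ih (by omega)]
      constructor
      · rintro ⟨h1, h2⟩ s hsm
        rcases Nat.lt_succ_iff_lt_or_eq.1 hsm with h | h
        · exact h1 s h
        · rwa [h]
      · intro h
        exact ⟨fun s hsm => h s (by omega), h m (by omega)⟩

end Sing
section Count

open Finset

/-- the set of pairs `p₁ < p₂ < m` with both entries avoiding `X`. -/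
def avoidSet (n m : ℕ) (X : Finset ℕ) : Finset (Fin n × Fin n) :=
  Finset.univ.filter (fun p => (p.1:ℕ) < (p.2:ℕ) ∧ (p.2:ℕ) < m ∧
    (p.1:ℕ) ∉ X ∧ (p.2:ℕ) ∉ X)

lemma avoidSet_card {n m : ℕ} (hm : m ≤ n) {X : Finset ℕ} (hX : X ⊆ Finset.range m) :
    (avoidSet n m X).card * 2 = (m - X.card) * (m - X.card - 1) := by
  classical
  set V : Finset (Fin n) := Finset.univ.filter (fun x => (x:ℕ) < m ∧ (x:ℕ) ∉ X) with hV
  have hVcard : V.card = m - X.card := by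
    have himg : V.image (Fin.val) = Finset.range m \ X := by
      ext y
      simp only [mem_image, mem_sdiff, mem_range, hV, mem_filter, mem_univ, true_and]
      constructor
      · rintro ⟨x, ⟨h1, h2⟩, rfl⟩; exact ⟨h1, h2⟩
      · rintro ⟨h1, h2⟩; exact ⟨⟨y, by omega⟩, ⟨h1, h2⟩, rfl⟩
    have := Finset.card_image_of_injective V (Fin.val_injective)
    rw [himg, Finset.card_sdiff_of_subset hX, Finset.card_range] at this
    omega
  set T := V.offDiag.filter (fun p => p.1 < p.2) with hT
  set T' := V.offDiag.filter (fun p => ¬ p.1 < p.2) with hT'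
  have hsum : T.card + T'.card = V.offDiag.card :=
    Finset.card_filter_add_card_filter_not _
  have hbij : T.card = T'.card := by
    apply Finset.card_bij (fun p _ => p.swap)
    · intro p hp
      simp only [hT, hT', mem_filter, Finset.mem_offDiag] at hp ⊢
      obtain ⟨⟨h1, h2, h3⟩, h4⟩ := hp
      exact ⟨⟨h2, h1, fun he => h3 he.symm⟩, by simp [Prod.swap]; exact le_of_lt h4⟩
    · intro p hp q hq he
      exact Prod.swap_injective he
    · intro q hq
      simp only [hT, hT', mem_filter, Finset.mem_offDiag, not_lt] at hq
      obtain ⟨⟨h1, h2, h3⟩, h4⟩ := hq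
      refine ⟨q.swap, ?_, by simp⟩
      simp only [hT, mem_filter, Finset.mem_offDiag]
      exact ⟨⟨h2, h1, fun he => h3 he.symm⟩, lt_of_le_of_ne h4 (Ne.symm h3)⟩
  have hAT : avoidSet n m X = T := by
    ext p
    simp only [avoidSet, hT, mem_filter, Finset.mem_offDiag, mem_univ, true_and, hV,
      Fin.lt_def]
    constructor
    · rintro ⟨h1, h2, h3, h4⟩
      exact ⟨⟨⟨by omega, h3⟩, ⟨h2, h4⟩, fun he => by rw [he] at h1; omega⟩, h1⟩
    · rintro ⟨⟨⟨ha1, ha2⟩, ⟨hb1, hb2⟩, hne⟩, hlt⟩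
      exact ⟨hlt, hb1, ha2, hb2⟩
  have hoff : V.offDiag.card = V.card * V.card - V.card := Finset.offDiag_card V
  rw [hAT]
  have hv := hVcard
  set v := V.card
  have : T.card * 2 = v * v - v := by omega
  cases' Nat.eq_zero_or_pos (m - X.card) with h h
  · rw [this, hv, h]
  · obtain ⟨w, hw⟩ : ∃ w, m - X.card = w + 1 := ⟨m - X.card - 1, by omega⟩
    rw [this, hv, hw]
    simp [Nat.mul_succ]

end Count
section Step

open Finset

variable {n : ℕ}

lemma mem_coalSpace_iff {ω : Fin (n-1) → Fin n × Fin n} :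
    ω ∈ coalSpace n ↔ ∀ s : Fin (n-1), ω s ∈ avoidSet n (n - (s:ℕ)) ∅ := by
  simp [coalSpace, ValidSeq, avoidSet]

lemma update_mem_coalSpace {ω : Fin (n-1) → Fin n × Fin n} {t : Fin (n-1)}
    {x : Fin n × Fin n} (hω : ω ∈ coalSpace n)
    (hx : x ∈ avoidSet n (n - (t:ℕ)) ∅) :
    Function.update ω t x ∈ coalSpace n := by
  rw [mem_coalSpace_iff] at hω ⊢
  intro s
  by_cases hs : s = t
  · subst hs; simpa using hx
  · rw [Function.update_of_ne hs]; exact hω s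

lemma eq_update_of_update_eq {ω g : Fin (n-1) → Fin n × Fin n} {t : Fin (n-1)}
    {d : Fin n × Fin n} (h : Function.update ω t d = g) :
    ω = Function.update g t (ω t) := by
  funext s
  by_cases hs : s = t
  · subst hs; simp
  · rw [Function.update_of_ne hs, ← h, Function.update_of_ne hs]

lemma step_count (t : Fin (n-1)) (P : (Fin (n-1) → Fin n × Fin n) → Prop)
    (B : (Fin (n-1) → Fin n × Fin n) → Finset (Fin n × Fin n)) (c : ℕ)
    (hP : ∀ ω x, P (Function.update ω t x) ↔ P ω)
    (hB : ∀ ω x, B (Function.update ω t x) = B ω)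
    (hBsub : ∀ ω, B ω ⊆ avoidSet n (n - (t:ℕ)) ∅)
    (hBc : ∀ ω ∈ coalSpace n, P ω → (B ω).card = c) :
    ((coalSpace n).filter (fun ω => P ω ∧ ω t ∈ B ω)).card
        * (avoidSet n (n - (t:ℕ)) ∅).card
      = ((coalSpace n).filter P).card * c := by
  classical
  have hn2 : 2 ≤ n := by have := t.2; omega
  set d : Fin n × Fin n := (⟨0, by omega⟩, ⟨1, by omega⟩) with hd
  have hdmem : d ∈ avoidSet n (n - (t:ℕ)) ∅ := by
    have := t.2
    have h2 := t.2
    simp only [avoidSet, mem_filter, mem_univ, true_and, hd, Finset.notMem_empty,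
      not_false_iff, and_true]
    constructor
    · show (0:ℕ) < (1:ℕ); omega
    · show (1:ℕ) < n - (t:ℕ); omega
  set T0 := (coalSpace n).filter (fun ω => P ω ∧ ω t = d) with hT0
  have hmap1 : ∀ ω ∈ (coalSpace n).filter (fun ω => P ω ∧ ω t ∈ B ω),
      Function.update ω t d ∈ T0 := by
    intro ω hω
    rw [mem_filter] at hω
    rw [hT0, mem_filter]
    exact ⟨update_mem_coalSpace hω.1 hdmem, (hP ω d).2 hω.2.1, by simp⟩
  have hmap2 : ∀ ω ∈ (coalSpace n).filter P, Function.update ω t d ∈ T0 := by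
    intro ω hω
    rw [mem_filter] at hω
    rw [hT0, mem_filter]
    exact ⟨update_mem_coalSpace hω.1 hdmem, (hP ω d).2 hω.2, by simp⟩
  rw [Finset.card_eq_sum_card_fiberwise hmap1, Finset.card_eq_sum_card_fiberwise hmap2]
  have hfib1 : ∀ g ∈ T0,
      (((coalSpace n).filter (fun ω => P ω ∧ ω t ∈ B ω)).filter
        (fun ω => Function.update ω t d = g)).card = c := by
    intro g hg
    rw [hT0, mem_filter] at hg
    obtain ⟨hgS, hgP, hgt⟩ := hg
    rw [← hBc g hgS hgP]
    apply Finset.card_bij (fun ω _ => ω t)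
    · intro ω hω
      simp only [mem_filter] at hω
      obtain ⟨⟨hωS, hωP, hωB⟩, hωu⟩ := hω
      have hωeq := eq_update_of_update_eq hωu
      rw [hωeq] at hωB ⊢
      rw [hB] at hωB
      simpa using hωB
    · intro ω hω ω' hω' he
      simp only [mem_filter] at hω hω'
      rw [eq_update_of_update_eq hω.2, eq_update_of_update_eq hω'.2, he]
    · intro x hx
      refine ⟨Function.update g t x, ?_, by simp⟩
      simp only [mem_filter]
      refine ⟨⟨update_mem_coalSpace hgS (hBsub g hx), (hP g x).2 hgP, ?_⟩, ?_⟩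
      · rw [hB]; simpa using hx
      · rw [Function.update_idem, ← hgt, Function.update_eq_self]
  have hfib2 : ∀ g ∈ T0,
      (((coalSpace n).filter P).filter
        (fun ω => Function.update ω t d = g)).card
        = (avoidSet n (n - (t:ℕ)) ∅).card := by
    intro g hg
    rw [hT0, mem_filter] at hg
    obtain ⟨hgS, hgP, hgt⟩ := hg
    apply Finset.card_bij (fun ω _ => ω t)
    · intro ω hω
      simp only [mem_filter] at hω
      rw [mem_coalSpace_iff] at hω
      exact hω.1.1 t
    · intro ω hω ω' hω' he
      simp only [mem_filter] at hω hω'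
      rw [eq_update_of_update_eq hω.2, eq_update_of_update_eq hω'.2, he]
    · intro x hx
      refine ⟨Function.update g t x, ?_, by simp⟩
      simp only [mem_filter]
      refine ⟨⟨update_mem_coalSpace hgS hx, (hP g x).2 hgP⟩, ?_⟩
      rw [Function.update_idem, ← hgt, Function.update_eq_self]
  rw [Finset.sum_congr rfl hfib1, Finset.sum_congr rfl hfib2, Finset.sum_const,
    Finset.sum_const, smul_eq_mul, smul_eq_mul]
  ring

end Step
section Cnt

open Finset

/-- instance-free count of sequences in the coalescent space satisfying `P`. -/
noncomputable def cnt (n : ℕ) (P : (Fin (n-1) → Fin n × Fin n) → Prop) : ℕ :=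
  ((coalSpace n).filter P).card

lemma cnt_def' {n : ℕ} (P : (Fin (n-1) → Fin n × Fin n) → Prop) [DecidablePred P] :
    cnt n P = ((coalSpace n).filter P).card := by
  unfold cnt
  congr!

lemma cnt_congr {n : ℕ} {P Q : (Fin (n-1) → Fin n × Fin n) → Prop}
    (h : ∀ ω ∈ coalSpace n, P ω ↔ Q ω) : cnt n P = cnt n Q := by
  unfold cnt
  apply congrArg
  ext ω
  simp only [Finset.mem_filter]
  exact ⟨fun hh => ⟨hh.1, (h ω hh.1).1 hh.2⟩, fun hh => ⟨hh.1, (h ω hh.1).2 hh.2⟩⟩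

lemma cnt_true {n : ℕ} : cnt n (fun _ => True) = (coalSpace n).card := by
  unfold cnt
  exact congrArg Finset.card (by ext ω; simp)

end Cnt
section Rec

open Finset

variable {n : ℕ}

lemma even_mul_pred (A : ℕ) : Even (A * (A - 1)) := by
  rcases A with _ | u
  · simp
  · simpa [Nat.succ_sub_one, mul_comm] using Nat.even_mul_succ_self u

lemma avoid_mono {a : Fin n} {s : ℕ} {ω ω' : Fin (n-1) → Fin n × Fin n}
    (h : ∀ u : Fin (n-1), (u:ℕ) ≤ s → ω u = ω' u) :
    Avoid n a s ω → Avoid n a s ω' := by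
  intro hA hs'
  have hc : chainMap n ω s a = chainMap n ω' s a :=
    chainMap_congr (fun u hu => h u (le_of_lt hu)) a
  rw [← h ⟨s, hs'⟩ (le_refl s), ← hc]
  exact hA hs'

lemma avoid_update_iff {a : Fin n} {s : ℕ} {t : Fin (n-1)} (hst : s < (t:ℕ))
    (ω : Fin (n-1) → Fin n × Fin n) (x : Fin n × Fin n) :
    Avoid n a s (Function.update ω t x) ↔ Avoid n a s ω := by
  constructor
  · exact avoid_mono (fun u hu =>
      Function.update_of_ne (Fin.ne_of_val_ne (by omega)) x ω)
  · exact avoid_mono (fun u hu =>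
      (Function.update_of_ne (Fin.ne_of_val_ne (by omega)) x ω).symm)

lemma chainMap_update {a : Fin n} {t : ℕ} (ht : t < n - 1)
    (ω : Fin (n-1) → Fin n × Fin n) (x : Fin n × Fin n) :
    chainMap n (Function.update ω ⟨t, ht⟩ x) t a = chainMap n ω t a :=
  chainMap_congr (fun u hu =>
    Function.update_of_ne (Fin.ne_of_val_ne (by simp; omega)) x ω) a

lemma avoid_iff_mem {a : Fin n} {t : ℕ} (ht : t < n - 1)
    {ω : Fin (n-1) → Fin n × Fin n} (hω : ω ∈ coalSpace n) :
    Avoid n a t ω ↔ ω ⟨t, ht⟩ ∈ avoidSet n (n - t) {chainMap n ω t a} := by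
  rw [mem_coalSpace_iff] at hω
  have hv := hω ⟨t, ht⟩
  simp only [avoidSet, mem_filter, mem_univ, true_and, Finset.notMem_empty,
    not_false_iff, and_true, Finset.mem_singleton] at hv ⊢
  constructor
  · intro h
    have := h ht
    exact ⟨hv.1, hv.2, this.1, this.2⟩
  · rintro ⟨h1, h2, h3, h4⟩ h
    exact ⟨h3, h4⟩

lemma avoid2_iff_mem {a b : Fin n} {t : ℕ} (ht : t < n - 1)
    {ω : Fin (n-1) → Fin n × Fin n} (hω : ω ∈ coalSpace n) :
    (Avoid n a t ω ∧ Avoid n b t ω) ↔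
      ω ⟨t, ht⟩ ∈ avoidSet n (n - t) {chainMap n ω t a, chainMap n ω t b} := by
  rw [mem_coalSpace_iff] at hω
  have hv := hω ⟨t, ht⟩
  simp only [avoidSet, mem_filter, mem_univ, true_and, Finset.notMem_empty,
    not_false_iff, and_true, Finset.mem_insert, Finset.mem_singleton, not_or] at hv ⊢
  constructor
  · intro h
    have h1 := h.1 ht
    have h2 := h.2 ht
    exact ⟨hv.1, hv.2, ⟨h1.1, h2.1⟩, ⟨h1.2, h2.2⟩⟩
  · rintro ⟨h1, h2, ⟨h3a, h3b⟩, ⟨h4a, h4b⟩⟩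
    exact ⟨fun h => ⟨h3a, h4a⟩, fun h => ⟨h3b, h4b⟩⟩

/-- auxiliary: allowed pairs avoiding one label. -/
def Bone (n t : ℕ) (a : Fin n) (ω : Fin (n-1) → Fin n × Fin n) : Finset (Fin n × Fin n) :=
  avoidSet n (n - t) {chainMap n ω t a}

/-- auxiliary: allowed pairs avoiding two labels. -/
def Btwo (n t : ℕ) (a b : Fin n) (ω : Fin (n-1) → Fin n × Fin n) : Finset (Fin n × Fin n) :=
  avoidSet n (n - t) {chainMap n ω t a, chainMap n ω t b}

lemma rec_one (a : Fin n) (t : ℕ) (ht : t < n - 1)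
    (P : (Fin (n-1) → Fin n × Fin n) → Prop)
    (hP : ∀ ω x, P (Function.update ω ⟨t, ht⟩ x) ↔ P ω) :
    cnt n (fun ω => P ω ∧ Avoid n a t ω) * ((n-t) * (n-t-1))
      = cnt n P * ((n-t-1) * (n-t-2)) := by
  classical
  rw [cnt_def' (fun ω => P ω ∧ Avoid n a t ω), cnt_def' P]
  have hBdef : ∀ ω, Bone n t a ω = avoidSet n (n - t) {chainMap n ω t a} :=
    fun ω => rfl
  have hB : ∀ ω x, Bone n t a (Function.update ω ⟨t, ht⟩ x) = Bone n t a ω := by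
    intro ω x
    simp only [hBdef, chainMap_update ht]
  have hBsub : ∀ ω, Bone n t a ω ⊆ avoidSet n (n - t) ∅ := by
    intro ω p hp
    simp only [hBdef, avoidSet, mem_filter] at hp ⊢
    tauto
  have hBc : ∀ ω ∈ coalSpace n, P ω → (Bone n t a ω).card = ((n-t-1) * (n-t-1-1)) / 2 := by
    intro ω hω _
    have hsub : ({chainMap n ω t a} : Finset ℕ) ⊆ Finset.range (n - t) := by
      simp only [Finset.singleton_subset_iff, Finset.mem_range]
      exact chainMap_lt (by simpa [coalSpace, ValidSeq] using hω) (le_of_lt ht) a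
    have := avoidSet_card (n := n) (by omega) hsub
    rw [Finset.card_singleton] at this
    rw [hBdef]
    omega
  have hfe : (coalSpace n).filter (fun ω => P ω ∧ Avoid n a t ω)
      = (coalSpace n).filter (fun ω => P ω ∧ ω ⟨t, ht⟩ ∈ Bone n t a ω) := by
    apply Finset.filter_congr
    intro ω hω
    rw [avoid_iff_mem ht hω, hBdef ω]
  have hA2 : (avoidSet n (n - t) ∅).card * 2 = (n-t) * (n-t-1) := by
    have := avoidSet_card (n := n) (m := n - t) (by omega)
      (Finset.empty_subset (Finset.range (n - t)))
    simpa using this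
  have hc2 : (((n-t-1) * (n-t-1-1)) / 2) * 2 = (n-t-1) * (n-t-2) := by
    have he := even_mul_pred (n-t-1)
    rcases he with ⟨j, hj⟩
    have : n - t - 1 - 1 = n - t - 2 := by omega
    rw [this] at hj ⊢
    omega
  have h := step_count ⟨t, ht⟩ P (Bone n t a) (((n-t-1) * (n-t-1-1)) / 2) hP hB hBsub hBc
  rw [hfe]
  calc ((coalSpace n).filter (fun ω => P ω ∧ ω ⟨t, ht⟩ ∈ Bone n t a ω)).card * ((n-t) * (n-t-1))
      = ((coalSpace n).filter (fun ω => P ω ∧ ω ⟨t, ht⟩ ∈ Bone n t a ω)).card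
          * ((avoidSet n (n - t) ∅).card * 2) := by rw [hA2]
    _ = (((coalSpace n).filter (fun ω => P ω ∧ ω ⟨t, ht⟩ ∈ Bone n t a ω)).card
          * (avoidSet n (n - t) ∅).card) * 2 := by ring
    _ = (((coalSpace n).filter P).card * (((n-t-1) * (n-t-1-1)) / 2)) * 2 := by rw [h]
    _ = ((coalSpace n).filter P).card * ((((n-t-1) * (n-t-1-1)) / 2) * 2) := by ring
    _ = ((coalSpace n).filter P).card * ((n-t-1) * (n-t-2)) := by rw [hc2]

lemma rec_two (a b : Fin n) (t : ℕ) (ht : t < n - 1)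
    (P : (Fin (n-1) → Fin n × Fin n) → Prop)
    (hP : ∀ ω x, P (Function.update ω ⟨t, ht⟩ x) ↔ P ω)
    (hdist : ∀ ω ∈ coalSpace n, P ω → chainMap n ω t a ≠ chainMap n ω t b) :
    cnt n (fun ω => P ω ∧ Avoid n a t ω ∧ Avoid n b t ω) * ((n-t) * (n-t-1))
      = cnt n P * ((n-t-2) * (n-t-3)) := by
  classical
  rw [cnt_def' (fun ω => P ω ∧ Avoid n a t ω ∧ Avoid n b t ω), cnt_def' P]
  have hBdef : ∀ ω, Btwo n t a b ω = avoidSet n (n - t) {chainMap n ω t a, chainMap n ω t b} :=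
    fun ω => rfl
  have hB : ∀ ω x, Btwo n t a b (Function.update ω ⟨t, ht⟩ x) = Btwo n t a b ω := by
    intro ω x
    simp only [hBdef, chainMap_update ht]
  have hBsub : ∀ ω, Btwo n t a b ω ⊆ avoidSet n (n - t) ∅ := by
    intro ω p hp
    simp only [hBdef, avoidSet, mem_filter] at hp ⊢
    tauto
  have hBc : ∀ ω ∈ coalSpace n, P ω → (Btwo n t a b ω).card = ((n-t-2) * (n-t-2-1)) / 2 := by
    intro ω hω hPω
    have hval : ValidSeq n ω := by simpa [coalSpace, ValidSeq] using hω
    have hsub : ({chainMap n ω t a, chainMap n ω t b} : Finset ℕ)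
        ⊆ Finset.range (n - t) := by
      intro y hy
      simp only [Finset.mem_insert, Finset.mem_singleton] at hy
      rcases hy with rfl | rfl
      · exact Finset.mem_range.2 (chainMap_lt hval (le_of_lt ht) a)
      · exact Finset.mem_range.2 (chainMap_lt hval (le_of_lt ht) b)
    have hcard2 : ({chainMap n ω t a, chainMap n ω t b} : Finset ℕ).card = 2 :=
      Finset.card_pair (hdist ω hω hPω)
    have := avoidSet_card (n := n) (by omega) hsub
    rw [hcard2] at this
    rw [hBdef]
    omega
  have hfe : (coalSpace n).filter (fun ω => P ω ∧ Avoid n a t ω ∧ Avoid n b t ω)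
      = (coalSpace n).filter (fun ω => P ω ∧ ω ⟨t, ht⟩ ∈ Btwo n t a b ω) := by
    apply Finset.filter_congr
    intro ω hω
    rw [avoid2_iff_mem ht hω, hBdef ω]
  have hA2 : (avoidSet n (n - t) ∅).card * 2 = (n-t) * (n-t-1) := by
    have := avoidSet_card (n := n) (m := n - t) (by omega)
      (Finset.empty_subset (Finset.range (n - t)))
    simpa using this
  have hc2 : (((n-t-2) * (n-t-2-1)) / 2) * 2 = (n-t-2) * (n-t-3) := by
    have he := even_mul_pred (n-t-2)
    rcases he with ⟨j, hj⟩
    have : n - t - 2 - 1 = n - t - 3 := by omega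
    rw [this] at hj ⊢
    omega
  have h := step_count ⟨t, ht⟩ P (Btwo n t a b) (((n-t-2) * (n-t-2-1)) / 2) hP hB hBsub hBc
  rw [hfe]
  calc ((coalSpace n).filter (fun ω => P ω ∧ ω ⟨t, ht⟩ ∈ Btwo n t a b ω)).card * ((n-t) * (n-t-1))
      = ((coalSpace n).filter (fun ω => P ω ∧ ω ⟨t, ht⟩ ∈ Btwo n t a b ω)).card
          * ((avoidSet n (n - t) ∅).card * 2) := by rw [hA2]
    _ = (((coalSpace n).filter (fun ω => P ω ∧ ω ⟨t, ht⟩ ∈ Btwo n t a b ω)).card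
          * (avoidSet n (n - t) ∅).card) * 2 := by ring
    _ = (((coalSpace n).filter P).card * (((n-t-2) * (n-t-2-1)) / 2)) * 2 := by rw [h]
    _ = ((coalSpace n).filter P).card * ((((n-t-2) * (n-t-2-1)) / 2) * 2) := by ring
    _ = ((coalSpace n).filter P).card * ((n-t-2) * (n-t-3)) := by rw [hc2]

end Rec
section Tele

open Finset

variable {n : ℕ}

lemma forall_lt_succ_iff' {A : ℕ → Prop} (t : ℕ) :
    (∀ s < t+1, A s) ↔ (∀ s < t, A s) ∧ A t := by
  constructor
  · intro h
    exact ⟨fun s hs => h s (by omega), h t (by omega)⟩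
  · rintro ⟨h1, h2⟩ s hs
    rcases Nat.lt_succ_iff_lt_or_eq.1 hs with h | rfl
    · exact h1 s h
    · exact h2

lemma coalSpace_card_pos (hn : 2 ≤ n) : 0 < (coalSpace n).card := by
  apply Finset.card_pos.2
  refine ⟨fun s => (⟨0, by omega⟩, ⟨1, by omega⟩), ?_⟩
  simp only [coalSpace, mem_filter, mem_univ, true_and]
  intro s
  have := s.2
  refine ⟨?_, ?_⟩
  · show (0:ℕ) < (1:ℕ); omega
  · show (1:ℕ) < n - (s:ℕ); omega

lemma tele1 (a : Fin n) {k : ℕ} (hk : 1 ≤ k) (hkn : k ≤ n) :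
    ∀ t, t ≤ n - k →
    cnt n (fun ω => ∀ s < t, Avoid n a s ω) * (n * (n-1))
      = (coalSpace n).card * ((n - t) * (n - t - 1)) := by
  intro t
  induction t with
  | zero =>
      intro _
      have he : cnt n (fun ω => ∀ s < 0, Avoid n a s ω) = (coalSpace n).card := by
        rw [cnt_congr (Q := fun _ => True)
          (fun ω _ => ⟨fun _ => trivial, fun _ s hs => by omega⟩), cnt_true]
      rw [he]
      norm_num
  | succ t ih =>
      intro ht1
      have ht : t < n - 1 := by omega
      have hP : ∀ ω x, (∀ s < t, Avoid n a s (Function.update ω ⟨t, ht⟩ x))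
          ↔ (∀ s < t, Avoid n a s ω) := by
        intro ω x
        constructor <;> intro h s hs
        · exact (avoid_update_iff (t := (⟨t, ht⟩ : Fin (n-1))) (by simpa using hs) ω x).1
            (h s hs)
        · exact (avoid_update_iff (t := (⟨t, ht⟩ : Fin (n-1))) (by simpa using hs) ω x).2
            (h s hs)
      have hsplit : cnt n (fun ω => ∀ s < t+1, Avoid n a s ω)
          = cnt n (fun ω => (∀ s < t, Avoid n a s ω) ∧ Avoid n a t ω) := by
        apply cnt_congr
        intro ω _
        rw [forall_lt_succ_iff']
      have hstep := rec_one a t ht (fun ω => ∀ s < t, Avoid n a s ω) hP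
      beta_reduce at hstep
      rw [hsplit]
      have e1 : n - (t+1) = n - t - 1 := by omega
      have e2 : n - (t+1) - 1 = n - t - 2 := by omega
      rw [e2, e1]
      have hpos : 0 < (n - t) * (n - t - 1) := Nat.mul_pos (by omega) (by omega)
      apply Nat.eq_of_mul_eq_mul_right hpos
      calc cnt n (fun ω => (∀ s < t, Avoid n a s ω) ∧ Avoid n a t ω)
            * (n * (n-1)) * ((n - t) * (n - t - 1))
          = (cnt n (fun ω => (∀ s < t, Avoid n a s ω) ∧ Avoid n a t ω)
            * ((n - t) * (n - t - 1))) * (n * (n-1)) := by ring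
        _ = (cnt n (fun ω => ∀ s < t, Avoid n a s ω)
            * ((n-t-1) * (n-t-2))) * (n * (n-1)) := by rw [hstep]
        _ = (cnt n (fun ω => ∀ s < t, Avoid n a s ω)
            * (n * (n-1))) * ((n-t-1) * (n-t-2)) := by ring
        _ = ((coalSpace n).card * ((n - t) * (n - t - 1))) * ((n-t-1) * (n-t-2)) := by
              rw [ih (by omega)]
        _ = (coalSpace n).card * ((n - t - 1) * (n - t - 2)) * ((n - t) * (n - t - 1)) := by
              ring

lemma tele2a (a b : Fin n) (hab : a ≠ b) {l : ℕ} (hl1 : 1 ≤ l) (hln : l ≤ n) :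
    ∀ t, t ≤ n - l →
    cnt n (fun ω => (∀ s < t, Avoid n a s ω) ∧
        (∀ s < t, s < n - l → Avoid n b s ω))
        * ((n * (n-1)) * ((n-1) * (n-2)))
      = (coalSpace n).card
        * (((n - t) * (n - t - 1)) * ((n - t - 1) * (n - t - 2))) := by
  intro t
  induction t with
  | zero =>
      intro _
      have he : cnt n (fun ω => (∀ s < 0, Avoid n a s ω) ∧
          (∀ s < 0, s < n - l → Avoid n b s ω)) = (coalSpace n).card := by
        rw [cnt_congr (Q := fun _ => True)
          (fun ω _ => ⟨fun _ => trivial,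
            fun _ => ⟨fun s hs => by omega, fun s hs => by omega⟩⟩), cnt_true]
      rw [he]
      norm_num
  | succ t ih =>
      intro ht1
      have htl : t < n - l := by omega
      have ht : t < n - 1 := by omega
      have hP : ∀ ω x, ((∀ s < t, Avoid n a s (Function.update ω ⟨t, ht⟩ x)) ∧
            (∀ s < t, s < n - l → Avoid n b s (Function.update ω ⟨t, ht⟩ x)))
          ↔ ((∀ s < t, Avoid n a s ω) ∧ (∀ s < t, s < n - l → Avoid n b s ω)) := by
        intro ω x
        constructor <;> rintro ⟨h1, h2⟩ <;> refine ⟨fun s hs => ?_, fun s hs hs' => ?_⟩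
        · exact (avoid_update_iff (t := (⟨t, ht⟩ : Fin (n-1))) (by simpa using hs) ω x).1
            (h1 s hs)
        · exact (avoid_update_iff (t := (⟨t, ht⟩ : Fin (n-1))) (by simpa using hs) ω x).1
            (h2 s hs hs')
        · exact (avoid_update_iff (t := (⟨t, ht⟩ : Fin (n-1))) (by simpa using hs) ω x).2
            (h1 s hs)
        · exact (avoid_update_iff (t := (⟨t, ht⟩ : Fin (n-1))) (by simpa using hs) ω x).2
            (h2 s hs hs')
      have hdist : ∀ ω ∈ coalSpace n,
          ((∀ s < t, Avoid n a s ω) ∧ (∀ s < t, s < n - l → Avoid n b s ω)) →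
          chainMap n ω t a ≠ chainMap n ω t b := by
        intro ω hω hQ
        have hval : ValidSeq n ω := by simpa [coalSpace, ValidSeq] using hω
        have hsa : Sing n a t ω := (sing_iff_avoid hval (by omega) a).2 hQ.1
        intro he
        exact hab (hsa b he.symm).symm
      have hsplit : cnt n (fun ω => (∀ s < t+1, Avoid n a s ω) ∧
            (∀ s < t+1, s < n - l → Avoid n b s ω))
          = cnt n
            (fun ω => ((∀ s < t, Avoid n a s ω) ∧ (∀ s < t, s < n - l → Avoid n b s ω))
              ∧ Avoid n a t ω ∧ Avoid n b t ω) := by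
        apply cnt_congr
        intro ω _
        rw [forall_lt_succ_iff' (A := fun s => Avoid n a s ω),
          forall_lt_succ_iff' (A := fun s => s < n - l → Avoid n b s ω)]
        constructor
        · rintro ⟨⟨h1, h2⟩, ⟨h3, h4⟩⟩
          exact ⟨⟨h1, h3⟩, h2, h4 htl⟩
        · rintro ⟨⟨h1, h3⟩, h2, h4⟩
          exact ⟨⟨h1, h2⟩, ⟨h3, fun _ => h4⟩⟩
      have hstep := rec_two a b t ht
        (fun ω => (∀ s < t, Avoid n a s ω) ∧ (∀ s < t, s < n - l → Avoid n b s ω))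
        hP hdist
      beta_reduce at hstep
      rw [hsplit]
      have e1 : n - (t+1) = n - t - 1 := by omega
      have e2 : n - (t+1) - 1 = n - t - 2 := by omega
      have e3 : n - (t+1) - 2 = n - t - 3 := by omega
      rw [e3, e2, e1]
      have hpos : 0 < (n - t) * (n - t - 1) := Nat.mul_pos (by omega) (by omega)
      apply Nat.eq_of_mul_eq_mul_right hpos
      calc cnt n
              (fun ω => ((∀ s < t, Avoid n a s ω) ∧ (∀ s < t, s < n - l → Avoid n b s ω))
                ∧ Avoid n a t ω ∧ Avoid n b t ω)
            * ((n * (n-1)) * ((n-1) * (n-2))) * ((n - t) * (n - t - 1))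
          = (cnt n
              (fun ω => ((∀ s < t, Avoid n a s ω) ∧ (∀ s < t, s < n - l → Avoid n b s ω))
                ∧ Avoid n a t ω ∧ Avoid n b t ω)
            * ((n - t) * (n - t - 1))) * ((n * (n-1)) * ((n-1) * (n-2))) := by ring
        _ = (cnt n
              (fun ω => (∀ s < t, Avoid n a s ω) ∧ (∀ s < t, s < n - l → Avoid n b s ω))
            * ((n-t-2) * (n-t-3))) * ((n * (n-1)) * ((n-1) * (n-2))) := by rw [hstep]
        _ = (cnt n
              (fun ω => (∀ s < t, Avoid n a s ω) ∧ (∀ s < t, s < n - l → Avoid n b s ω))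
            * ((n * (n-1)) * ((n-1) * (n-2)))) * ((n-t-2) * (n-t-3)) := by ring
        _ = ((coalSpace n).card
            * (((n - t) * (n - t - 1)) * ((n - t - 1) * (n - t - 2)))) * ((n-t-2) * (n-t-3)) := by
              rw [ih (by omega)]
        _ = (coalSpace n).card
            * (((n - t - 1) * (n - t - 2)) * ((n - t - 2) * (n - t - 3)))
            * ((n - t) * (n - t - 1)) := by ring

lemma tele2b (a b : Fin n) {k l : ℕ} (hk : 1 ≤ k) (hkl : k ≤ l) (hln : l ≤ n) :
    ∀ d, (n - l) + d ≤ n - k →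
    cnt n (fun ω => (∀ s < (n - l) + d, Avoid n a s ω) ∧
        (∀ s < (n - l) + d, s < n - l → Avoid n b s ω)) * (l * (l-1))
      = cnt n (fun ω => (∀ s < n - l, Avoid n a s ω) ∧
        (∀ s < n - l, s < n - l → Avoid n b s ω))
        * ((n - ((n - l) + d)) * (n - ((n - l) + d) - 1)) := by
  intro d
  induction d with
  | zero =>
      intro _
      have e1 : n - ((n - l) + 0) = l := by omega
      rw [e1]
      have e2 : (n - l) + 0 = n - l := by omega
      rw [e2]
  | succ d ih =>
      intro hd1
      set t := (n - l) + d with htdef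
      have ht : t < n - 1 := by omega
      have htl : ¬ (t < n - l) := by omega
      have hP : ∀ ω x, ((∀ s < t, Avoid n a s (Function.update ω ⟨t, ht⟩ x)) ∧
            (∀ s < t, s < n - l → Avoid n b s (Function.update ω ⟨t, ht⟩ x)))
          ↔ ((∀ s < t, Avoid n a s ω) ∧ (∀ s < t, s < n - l → Avoid n b s ω)) := by
        intro ω x
        constructor <;> rintro ⟨h1, h2⟩ <;> refine ⟨fun s hs => ?_, fun s hs hs' => ?_⟩
        · exact (avoid_update_iff (t := (⟨t, ht⟩ : Fin (n-1))) (by simpa using hs) ω x).1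
            (h1 s hs)
        · exact (avoid_update_iff (t := (⟨t, ht⟩ : Fin (n-1))) (by simpa using hs) ω x).1
            (h2 s hs hs')
        · exact (avoid_update_iff (t := (⟨t, ht⟩ : Fin (n-1))) (by simpa using hs) ω x).2
            (h1 s hs)
        · exact (avoid_update_iff (t := (⟨t, ht⟩ : Fin (n-1))) (by simpa using hs) ω x).2
            (h2 s hs hs')
      have hsplit : cnt n (fun ω => (∀ s < t+1, Avoid n a s ω) ∧
            (∀ s < t+1, s < n - l → Avoid n b s ω))
          = cnt n
            (fun ω => ((∀ s < t, Avoid n a s ω) ∧ (∀ s < t, s < n - l → Avoid n b s ω))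
              ∧ Avoid n a t ω) := by
        apply cnt_congr
        intro ω _
        rw [forall_lt_succ_iff' (A := fun s => Avoid n a s ω),
          forall_lt_succ_iff' (A := fun s => s < n - l → Avoid n b s ω)]
        constructor
        · rintro ⟨⟨h1, h2⟩, ⟨h3, h4⟩⟩
          exact ⟨⟨h1, h3⟩, h2⟩
        · rintro ⟨⟨h1, h3⟩, h2⟩
          exact ⟨⟨h1, h2⟩, ⟨h3, fun h => absurd h htl⟩⟩
      have hstep := rec_one a t ht
        (fun ω => (∀ s < t, Avoid n a s ω) ∧ (∀ s < t, s < n - l → Avoid n b s ω)) hP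
      beta_reduce at hstep
      have hst : (n - l) + (d + 1) = t + 1 := by omega
      rw [hst, hsplit]
      have e1 : n - (t+1) = n - t - 1 := by omega
      have e2 : n - (t+1) - 1 = n - t - 2 := by omega
      rw [e2, e1]
      have hpos : 0 < (n - t) * (n - t - 1) := Nat.mul_pos (by omega) (by omega)
      apply Nat.eq_of_mul_eq_mul_right hpos
      have ih' := ih (by omega)
      calc cnt n
              (fun ω => ((∀ s < t, Avoid n a s ω) ∧ (∀ s < t, s < n - l → Avoid n b s ω))
                ∧ Avoid n a t ω) * (l * (l-1)) * ((n - t) * (n - t - 1))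
          = (cnt n
              (fun ω => ((∀ s < t, Avoid n a s ω) ∧ (∀ s < t, s < n - l → Avoid n b s ω))
                ∧ Avoid n a t ω) * ((n - t) * (n - t - 1))) * (l * (l-1)) := by ring
        _ = (cnt n
              (fun ω => (∀ s < t, Avoid n a s ω) ∧ (∀ s < t, s < n - l → Avoid n b s ω))
            * ((n-t-1) * (n-t-2))) * (l * (l-1)) := by rw [hstep]
        _ = (cnt n
              (fun ω => (∀ s < t, Avoid n a s ω) ∧ (∀ s < t, s < n - l → Avoid n b s ω))
            * (l * (l-1))) * ((n-t-1) * (n-t-2)) := by ring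
        _ = (cnt n (fun ω => (∀ s < n - l, Avoid n a s ω) ∧
              (∀ s < n - l, s < n - l → Avoid n b s ω))
            * ((n - t) * (n - t - 1))) * ((n-t-1) * (n-t-2)) := by rw [ih']
        _ = cnt n (fun ω => (∀ s < n - l, Avoid n a s ω) ∧
              (∀ s < n - l, s < n - l → Avoid n b s ω))
            * ((n - t - 1) * (n - t - 2)) * ((n - t) * (n - t - 1)) := by ring

end Tele
section Final

open Finset

lemma coalP_cnt {n : ℕ} (A : (Fin (n-1) → Fin n × Fin n) → Prop) :
    coalP n A = (cnt n A : ℝ) / ((coalSpace n).card : ℝ) := rfl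

lemma valid_of_mem {n : ℕ} {ω : Fin (n-1) → Fin n × Fin n} (hω : ω ∈ coalSpace n) :
    ValidSeq n ω := by simpa [coalSpace, ValidSeq] using hω

/-- In the Kingman (Tajima) coalescent with `n` leaves, a
fixed leaf is still an external branch when `k` lineages remain with
probability `k(k-1)/(n(n-1))`, and two fixed distinct leaves remain external
until `l` resp. `k ≤ l` lineages remain with probability
`(l-1)(l-2)k(k-1)/(n(n-1)²(n-2))`. -/
theorem coalescent_external_probabilities (n : ℕ) (a b : Fin n) (hab : a ≠ b)
    (k l : ℕ) (hk : 1 ≤ k) (hkl : k ≤ l) (hl : l ≤ n) :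
    (2 ≤ n → coalP n (fun ω => Zext n ω a k) =
      (k : ℝ) * ((k : ℝ) - 1) / ((n : ℝ) * ((n : ℝ) - 1))) ∧
    (3 ≤ n → coalP n (fun ω => Zext n ω a k ∧ Zext n ω b l) =
      ((l : ℝ) - 1) * ((l : ℝ) - 2) * (k : ℝ) * ((k : ℝ) - 1) /
        ((n : ℝ) * ((n : ℝ) - 1) ^ 2 * ((n : ℝ) - 2))) := by
  have hkn : k ≤ n := le_trans hkl hl
  constructor
  · -- single leaf
    intro hn
    have h := tele1 a hk hkn (n - k) le_rfl
    have e2 : n - (n - k) - 1 = k - 1 := by omega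
    have e1 : n - (n - k) = k := by omega
    rw [e2, e1] at h
    have hev : cnt n (fun ω => Zext n ω a k)
        = cnt n (fun ω => ∀ s < n - k, Avoid n a s ω) := by
      apply cnt_congr
      intro ω hω
      rw [zext_iff_sing]
      exact sing_iff_avoid (valid_of_mem hω) (by omega) a
    have hC := coalSpace_card_pos hn
    have hCpos : (0:ℝ) < ((coalSpace n).card : ℝ) := by exact_mod_cast hC
    have hnpos : (0:ℝ) < (n:ℝ) * ((n:ℝ) - 1) := by
      have h1 : (2:ℝ) ≤ (n:ℝ) := by exact_mod_cast hn
      nlinarith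
    rw [coalP_cnt, hev, div_eq_div_iff hCpos.ne' hnpos.ne']
    have hcast := congrArg (fun x : ℕ => (x : ℝ)) h
    push_cast [Nat.cast_sub (show 1 ≤ n by omega), Nat.cast_sub (show 1 ≤ k by omega)]
      at hcast
    linear_combination hcast
  · -- two leaves
    intro hn
    have hC := coalSpace_card_pos (n := n) (by omega)
    have hCpos : (0:ℝ) < ((coalSpace n).card : ℝ) := by exact_mod_cast hC
    have hn3 : (3:ℝ) ≤ (n:ℝ) := by exact_mod_cast hn
    have hdpos : (0:ℝ) < (n:ℝ) * ((n:ℝ) - 1) ^ 2 * ((n:ℝ) - 2) := by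
      have h0 : (0:ℝ) < (n:ℝ) := by linarith
      have h1 : (0:ℝ) < (n:ℝ) - 1 := by linarith
      have h2 : (0:ℝ) < (n:ℝ) - 2 := by linarith
      exact mul_pos (mul_pos h0 (pow_pos h1 2)) h2
    by_cases hl1 : l = 1
    · -- degenerate case: l = k = 1
      have hk1 : k = 1 := by omega
      subst hl1 hk1
      have hzero : cnt n (fun ω => Zext n ω a 1 ∧ Zext n ω b 1) = 0 := by
        rw [cnt_def']
        rw [Finset.card_eq_zero, Finset.filter_eq_empty_iff]
        intro ω hω
        rintro ⟨hZa, hZb⟩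
        have hval := valid_of_mem hω
        have hs : Sing n b (n - 1) ω := (zext_iff_sing ω b 1).1 hZb
        have ha1 : chainMap n ω (n-1) a < n - (n-1) := chainMap_lt hval le_rfl a
        have hb1 : chainMap n ω (n-1) b < n - (n-1) := chainMap_lt hval le_rfl b
        have : chainMap n ω (n-1) a = chainMap n ω (n-1) b := by omega
        exact hab (hs a this)
      rw [coalP_cnt, hzero]
      norm_num
    · have hl2 : 2 ≤ l := by omega
      have h1 := tele2a a b hab (l := l) (by omega) hl (n - l) le_rfl
      have f3 : n - (n - l) - 2 = l - 2 := by omega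
      have f2 : n - (n - l) - 1 = l - 1 := by omega
      have f1 : n - (n - l) = l := by omega
      rw [f3, f2, f1] at h1
      have h2 := tele2b a b hk hkl hl (l - k) (by omega)
      have g0 : (n - l) + (l - k) = n - k := by omega
      rw [g0] at h2
      have g2 : n - (n - k) - 1 = k - 1 := by omega
      have g1 : n - (n - k) = k := by omega
      rw [g2, g1] at h2
      have hev : cnt n (fun ω => Zext n ω a k ∧ Zext n ω b l)
          = cnt n (fun ω => (∀ s < n - k, Avoid n a s ω) ∧
              (∀ s < n - k, s < n - l → Avoid n b s ω)) := by
        apply cnt_congr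
        intro ω hω
        have hval := valid_of_mem hω
        rw [zext_iff_sing, zext_iff_sing, sing_iff_avoid hval (by omega) a,
          sing_iff_avoid hval (by omega) b]
        constructor
        · rintro ⟨hA, hB⟩
          exact ⟨hA, fun s _ hs => hB s hs⟩
        · rintro ⟨hA, hB⟩
          exact ⟨hA, fun s hs => hB s (by omega) hs⟩
      have hlpos : 0 < l * (l - 1) := Nat.mul_pos (by omega) (by omega)
      have key : cnt n (fun ω => (∀ s < n - k, Avoid n a s ω) ∧
              (∀ s < n - k, s < n - l → Avoid n b s ω))
            * ((n * (n-1)) * ((n-1) * (n-2)))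
          = (coalSpace n).card * ((k * (k-1)) * ((l-1) * (l-2))) := by
        apply Nat.eq_of_mul_eq_mul_right hlpos
        calc cnt n (fun ω => (∀ s < n - k, Avoid n a s ω) ∧
                (∀ s < n - k, s < n - l → Avoid n b s ω))
              * ((n * (n-1)) * ((n-1) * (n-2))) * (l * (l-1))
            = (cnt n (fun ω => (∀ s < n - k, Avoid n a s ω) ∧
                (∀ s < n - k, s < n - l → Avoid n b s ω)) * (l * (l-1)))
              * ((n * (n-1)) * ((n-1) * (n-2))) := by ring
          _ = (cnt n (fun ω => (∀ s < n - l, Avoid n a s ω) ∧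
                (∀ s < n - l, s < n - l → Avoid n b s ω)) * (k * (k-1)))
              * ((n * (n-1)) * ((n-1) * (n-2))) := by rw [h2]
          _ = (cnt n (fun ω => (∀ s < n - l, Avoid n a s ω) ∧
                (∀ s < n - l, s < n - l → Avoid n b s ω))
              * ((n * (n-1)) * ((n-1) * (n-2)))) * (k * (k-1)) := by ring
          _ = ((coalSpace n).card * ((l * (l-1)) * ((l-1) * (l-2)))) * (k * (k-1)) := by
                rw [h1]
          _ = (coalSpace n).card * ((k * (k-1)) * ((l-1) * (l-2))) * (l * (l-1)) := by
                ring
      rw [coalP_cnt, hev, div_eq_div_iff hCpos.ne' hdpos.ne']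
      have hcast := congrArg (fun x : ℕ => (x : ℝ)) key
      push_cast [Nat.cast_sub (show 1 ≤ n by omega), Nat.cast_sub (show 2 ≤ n by omega),
        Nat.cast_sub (show 1 ≤ k by omega), Nat.cast_sub (show 1 ≤ l by omega),
        Nat.cast_sub (show 2 ≤ l by omega)] at hcast
      linear_combination hcast
end Final
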